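/- Let 0 < σ < s, κ > 0 and M ≥ 0. Suppose E : ℝ → ℝ is differentiable on [0,∞) with E(t) ≥ 0, D : ℝ → ℝ is continuous on [0,∞) with D(t) ≥ 0, and suppose E′(t) + κ·D(t) ≤ 0 and (1+t)^s·E(t) ≤ M for all t ≥ 0. Then for all t ≥ 0, (1+t)^σ·E(t) + κ·∫₀ᵗ (1+τ)^σ D(τ) dτ ≤ E(0) + σM/(s−σ). -/

import Mathlib

open MeasureTheory

/-- Weighted-in-time energy estimate: from `E′ + κD ≤ 0` and the decay
`(1+t)^s E(t) ≤ M`, one gets a weighted bound with the smaller weight `σ < s`. -/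
theorem stmt13 (σ s κ M : ℝ) (hσ : 0 < σ) (hσs : σ < s) (hκ : 0 < κ) (hM : 0 ≤ M)
    (E E' D : ℝ → ℝ)
    (hderiv : ∀ t ≥ (0 : ℝ), HasDerivWithinAt E (E' t) (Set.Ici 0) t)
    (hEnonneg : ∀ t ≥ (0 : ℝ), 0 ≤ E t)
    (hDcont : ContinuousOn D (Set.Ici 0))
    (hDnonneg : ∀ t ≥ (0 : ℝ), 0 ≤ D t)
    (hineq : ∀ t ≥ (0 : ℝ), E' t + κ * D t ≤ 0)
    (hdecay : ∀ t ≥ (0 : ℝ), (1 + t) ^ s * E t ≤ M) :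
    ∀ t ≥ (0 : ℝ),
      (1 + t) ^ σ * E t + κ * ∫ τ in Set.Icc (0 : ℝ) t, (1 + τ) ^ σ * D τ ≤
        E 0 + σ * M / (s - σ) := by
  intro t ht
  set Dt : ℝ → ℝ := fun u => D (max u 0) with hDt
  have hDtcont : Continuous Dt :=
    hDcont.comp_continuous (continuous_id.max continuous_const)
      (fun x => Set.mem_Ici.mpr (le_max_right _ _))
  set g : ℝ → ℝ := fun τ => (1 + τ) ^ σ * Dt τ with hg
  have hw1 : Continuous fun u : ℝ => (1 + u) ^ σ := by
    rw [continuous_iff_continuousAt]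
    intro x
    exact (Real.continuousAt_rpow_const _ _ (Or.inr hσ.le)).comp
      ((continuous_const.add continuous_id).continuousAt)
  have hgcont : Continuous g := hw1.mul hDtcont
  have hprim : ∀ u : ℝ, HasDerivAt (fun v => ∫ τ in (0:ℝ)..v, g τ) (g u) u := fun u =>
    intervalIntegral.integral_hasDerivAt_right (hgcont.intervalIntegrable _ _)
      (hgcont.stronglyMeasurableAtFilter _ _) hgcont.continuousAt
  have hprimcont : Continuous fun u : ℝ => ∫ τ in (0:ℝ)..u, g τ := by
    rw [continuous_iff_continuousAt]
    exact fun u => (hprim u).continuousAt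
  set C : ℝ := σ * M / (s - σ) with hC
  have hsσ : (0:ℝ) < s - σ := by linarith
  have hCnn : 0 ≤ C := by positivity
  set Φ : ℝ → ℝ := fun u =>
    (1 + u) ^ σ * E u + κ * (∫ τ in (0:ℝ)..u, g τ) + C * (1 + u) ^ (σ - s) with hΦ
  have hEcont : ContinuousOn E (Set.Ici 0) := fun x hx => (hderiv x hx).continuousWithinAt
  have hw2 : ContinuousOn (fun u : ℝ => (1 + u) ^ (σ - s)) (Set.Ici 0) := by
    intro x hx
    have h1x : (1 : ℝ) + x ≠ 0 := by
      have : (0:ℝ) ≤ x := hx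
      positivity
    exact ((Real.continuousAt_rpow_const _ _ (Or.inl h1x)).comp
      ((continuous_const.add continuous_id).continuousAt)).continuousWithinAt
  have hΦcont : ContinuousOn Φ (Set.Ici 0) :=
    ((hw1.continuousOn.mul hEcont).add
      ((continuous_const.mul hprimcont).continuousOn)).add (continuousOn_const.mul hw2)
  -- derivative bound on the interior
  have hΦanti : AntitoneOn Φ (Set.Ici 0) := by
    apply antitoneOn_of_hasDerivWithinAt_nonpos (convex_Ici 0) hΦcont
      (f' := fun x => (1 * σ * (1 + x) ^ (σ - 1)) * E x + (1 + x) ^ σ * E' x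
        + κ * g x + C * (1 * (σ - s) * (1 + x) ^ (σ - s - 1)))
    · intro x hx
      rw [interior_Ici] at hx ⊢
      have hxpos : (0:ℝ) < x := hx
      have h1x : (0:ℝ) < 1 + x := by linarith
      have hE : HasDerivAt E (E' x) x :=
        (hderiv x hxpos.le).hasDerivAt (Ici_mem_nhds hxpos)
      have h1 : HasDerivAt (fun u : ℝ => (1 + u) ^ σ) (1 * σ * (1 + x) ^ (σ - 1)) x :=
        ((hasDerivAt_id x).const_add 1).rpow_const (Or.inl h1x.ne')
      have h2 : HasDerivAt (fun u : ℝ => (1 + u) ^ (σ - s))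
          (1 * (σ - s) * (1 + x) ^ (σ - s - 1)) x :=
        ((hasDerivAt_id x).const_add 1).rpow_const (Or.inl h1x.ne')
      exact (((h1.mul hE).add ((hprim x).const_mul κ)).add (h2.const_mul C)).hasDerivWithinAt
    · intro x hx
      rw [interior_Ici] at hx
      have hxpos : (0:ℝ) < x := hx
      have h1x : (0:ℝ) < 1 + x := by linarith
      have hmax : max x 0 = x := max_eq_left hxpos.le
      have hgx : g x = (1 + x) ^ σ * D x := by simp [hg, hDt, hmax]
      have hsplit : (1 + x) ^ σ * E' x + κ * g x = (1 + x) ^ σ * (E' x + κ * D x) := by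
        rw [hgx]; ring
      have hterm1 : (1 + x) ^ σ * (E' x + κ * D x) ≤ 0 :=
        mul_nonpos_of_nonneg_of_nonpos (Real.rpow_nonneg h1x.le σ) (hineq x hxpos.le)
      have hpow : (1 + x) ^ (σ - 1) = (1 + x) ^ (σ - s - 1) * (1 + x) ^ s := by
        rw [← Real.rpow_add h1x]; ring_nf
      have hkey : (1 + x) ^ (σ - 1) * E x ≤ (1 + x) ^ (σ - s - 1) * M := by
        rw [hpow, mul_assoc]
        exact mul_le_mul_of_nonneg_left (hdecay x hxpos.le)
          (Real.rpow_nonneg h1x.le _)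
      have hClast : C * (1 * (σ - s) * (1 + x) ^ (σ - s - 1))
          = -(σ * M * (1 + x) ^ (σ - s - 1)) := by
        rw [hC]; field_simp; ring
      have hkey2 : 1 * σ * (1 + x) ^ (σ - 1) * E x ≤ σ * M * (1 + x) ^ (σ - s - 1) := by
        have := mul_le_mul_of_nonneg_left hkey hσ.le
        calc 1 * σ * (1 + x) ^ (σ - 1) * E x = σ * ((1 + x) ^ (σ - 1) * E x) := by ring
          _ ≤ σ * ((1 + x) ^ (σ - s - 1) * M) := this
          _ = σ * M * (1 + x) ^ (σ - s - 1) := by ring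
      have : (1 * σ * (1 + x) ^ (σ - 1)) * E x + ((1 + x) ^ σ * E' x + κ * g x)
          + C * (1 * (σ - s) * (1 + x) ^ (σ - s - 1)) ≤ 0 := by
        rw [hsplit, hClast]
        linarith
      linarith [this]
  -- evaluate at 0 and t
  have hΦ0 : Φ 0 = E 0 + C := by
    simp [hΦ, Real.one_rpow]
  have hΦt : Φ t ≤ Φ 0 := hΦanti (Set.self_mem_Ici) ht ht
  have h1t : (0:ℝ) < 1 + t := by linarith
  -- rewrite the Icc integral as an interval integral of g
  have hint : (∫ τ in Set.Icc (0:ℝ) t, (1 + τ) ^ σ * D τ) = ∫ τ in (0:ℝ)..t, g τ := by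
    rw [intervalIntegral.integral_of_le ht, ← MeasureTheory.integral_Icc_eq_integral_Ioc]
    apply setIntegral_congr_fun measurableSet_Icc
    intro τ hτ
    simp [hg, hDt, max_eq_left hτ.1]
  have hlast : 0 ≤ C * (1 + t) ^ (σ - s) :=
    mul_nonneg hCnn (Real.rpow_nonneg h1t.le _)
  have := hΦt
  rw [hΦ0] at this
  simp only [hΦ] at this
  rw [hint]
  linarith
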